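/- Let (v_k) be a sequence of nonnegative reals satisfying v_{k+1} ≤ a₁ v_k + a₂ · max_{k−B ≤ ĵ ≤ k} v_ĵ for all k ≥ k₀ + B, where a₁, a₂ ≥ 0, a₁ + a₂ ≤ 1, 0 < a₁ + a₂, and set ρ = (a₁ + a₂)^{1/(B+1)}. If max_{k₀ ≤ ĵ ≤ k₀+B} v_ĵ ≤ V₀, then v_k ≤ ρ^{k − (k₀+B)} V₀ for all k ≥ k₀ + B. -/

import Mathlib

/-!
The bound `W k = ρ ^ (k - (k₀ + B)) * V₀` is antitone in `k` and equals `V₀` on the initial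
window. By strong induction, every term of the window `[k - B, k]` is at most `W (k - B)`, so the
recursion gives `v (k + 1) ≤ (a₁ + a₂) * W (k - B) = ρ ^ (B + 1) * W (k - B) ≤ W (k + 1)`:
one full window of `B + 1` steps costs exactly one factor `a₁ + a₂`.
-/

open Finset

theorem Real.rpow_one_div_succ_pow {x : ℝ} (hx : 0 ≤ x) (B : ℕ) :
    (x ^ ((1 : ℝ) / (B + 1))) ^ (B + 1) = x := by
  simpa [one_div] using Real.rpow_inv_natCast_pow hx B.succ_ne_zero

theorem le_pow_mul_of_delayed_contraction {v : ℕ → ℝ} {a₁ a₂ ρ V₀ : ℝ} {B k₀ : ℕ}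
    (ha₁ : 0 ≤ a₁) (ha₂ : 0 ≤ a₂) (hρ₀ : 0 ≤ ρ) (hρ₁ : ρ ≤ 1)
    (hρB : a₁ + a₂ ≤ ρ ^ (B + 1)) (hV₀ : 0 ≤ V₀)
    (hrec : ∀ k, k₀ + B ≤ k →
      v (k + 1) ≤ a₁ * v k + a₂ * (Icc (k - B) k).sup' (nonempty_Icc.mpr (Nat.sub_le k B)) v)
    (hinit : ∀ i ∈ Icc k₀ (k₀ + B), v i ≤ V₀) :
    ∀ k, k₀ ≤ k → v k ≤ ρ ^ (k - (k₀ + B)) * V₀ := by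
  have hanti : Antitone fun n : ℕ => ρ ^ n * V₀ := fun m n hmn =>
    mul_le_mul_of_nonneg_right (pow_le_pow_of_le_one hρ₀ hρ₁ hmn) hV₀
  intro k
  induction k using Nat.strong_induction_on with
  | _ k ih =>
    intro hk
    rcases le_or_gt k (k₀ + B) with hkB | hkB
    · rw [Nat.sub_eq_zero_of_le hkB, pow_zero, one_mul]
      exact hinit k (mem_Icc.mpr ⟨hk, hkB⟩)
    obtain ⟨j, rfl⟩ : ∃ j, k = j + 1 := ⟨k - 1, by omega⟩
    have hj : k₀ + B ≤ j := by omega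
    set W := ρ ^ (j - B - (k₀ + B)) * V₀ with hW
    have hwindow : (Icc (j - B) j).sup' (nonempty_Icc.mpr (Nat.sub_le j B)) v ≤ W :=
      sup'_le _ _ fun i hi => by
        rw [mem_Icc] at hi
        exact (ih i (by omega) (by omega)).trans (hanti (by omega))
    have hvj : v j ≤ W := (ih j (by omega) (by omega)).trans (hanti (by omega))
    calc v (j + 1)
        ≤ a₁ * v j + a₂ * (Icc (j - B) j).sup' (nonempty_Icc.mpr (Nat.sub_le j B)) v :=
          hrec j hj
      _ ≤ (a₁ + a₂) * W := by rw [add_mul]; gcongr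
      _ ≤ ρ ^ (B + 1) * W := by gcongr
      _ = ρ ^ (B + 1 + (j - B - (k₀ + B))) * V₀ := by rw [hW, ← mul_assoc, ← pow_add]
      _ ≤ ρ ^ (j + 1 - (k₀ + B)) * V₀ := hanti (by omega)

theorem stmt_1_general (v : ℕ → ℝ) (a₁ a₂ V₀ ρ : ℝ) (B k₀ : ℕ)
    (hv : ∀ k, 0 ≤ v k)
    (ha₁ : 0 ≤ a₁) (ha₂ : 0 ≤ a₂) (hsum : a₁ + a₂ ≤ 1)
    (hρ : ρ = (a₁ + a₂) ^ ((1 : ℝ) / (B + 1)))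
    (hrec : ∀ k, k₀ + B ≤ k →
      v (k + 1) ≤ a₁ * v k +
        a₂ * (Finset.Icc (k - B) k).sup' (Finset.nonempty_Icc.mpr (Nat.sub_le k B)) v)
    (hinit : (Finset.Icc k₀ (k₀ + B)).sup'
        (Finset.nonempty_Icc.mpr (Nat.le_add_right k₀ B)) v ≤ V₀) :
    ∀ k, k₀ + B ≤ k → v k ≤ ρ ^ (k - (k₀ + B)) * V₀ := by
  have hρ₀ : 0 ≤ ρ := hρ ▸ Real.rpow_nonneg (by positivity) _
  have hρ₁ : ρ ≤ 1 := hρ ▸ Real.rpow_le_one (by positivity) hsum (by positivity)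
  have hρB : ρ ^ (B + 1) = a₁ + a₂ := hρ ▸ Real.rpow_one_div_succ_pow (by positivity) B
  have hinit' : ∀ i ∈ Icc k₀ (k₀ + B), v i ≤ V₀ := fun i hi => (le_sup' v hi).trans hinit
  have hV₀ : 0 ≤ V₀ := (hv k₀).trans (hinit' k₀ (by simp))
  intro k hk
  exact le_pow_mul_of_delayed_contraction ha₁ ha₂ hρ₀ hρ₁ hρB.ge hV₀ hrec hinit' k (by omega)

theorem stmt_1 (v : ℕ → ℝ) (a₁ a₂ V₀ ρ : ℝ) (B k₀ : ℕ)
    (hv : ∀ k, 0 ≤ v k)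
    (ha₁ : 0 ≤ a₁) (ha₂ : 0 ≤ a₂) (hsum : a₁ + a₂ ≤ 1) (hpos : 0 < a₁ + a₂)
    (hρ : ρ = (a₁ + a₂) ^ ((1 : ℝ) / (B + 1)))
    (hrec : ∀ k, k₀ + B ≤ k →
      v (k + 1) ≤ a₁ * v k +
        a₂ * (Finset.Icc (k - B) k).sup' (Finset.nonempty_Icc.mpr (Nat.sub_le k B)) v)
    (hinit : (Finset.Icc k₀ (k₀ + B)).sup'
        (Finset.nonempty_Icc.mpr (Nat.le_add_right k₀ B)) v ≤ V₀) :
    ∀ k, k₀ + B ≤ k → v k ≤ ρ ^ (k - (k₀ + B)) * V₀ :=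
  stmt_1_general v a₁ a₂ V₀ ρ B k₀ hv ha₁ ha₂ hsum hρ hrec hinit
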